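/- arXiv:2001.00683 — 3 statements merged into one kernel-verified Lean document; each statement's English description precedes it below -/
import Mathlib

section
/- If A is an n×n complex matrix with numerical range contained in the sector S_α for α ∈ [0, π/2), then (Re A)⁻¹ ≤ sec²(α) · Re(A⁻¹) in the Loewner order. -/
/-!
Write `A = R + iS` with `R = Re A` and `S = Im A`. The sector condition is `-tR ≤ S ≤ tR` for
`t = tan α`. Since `A R⁻¹ Aᴴ = R + S R⁻¹ S` and `Re (A⁻¹) = A⁻¹ R A⁻ᴴ`, conjugating by `A⁻¹` gives
`(Re A)⁻¹ = A⁻¹ (R + S R⁻¹ S) A⁻ᴴ`, so with `sec² α = 1 + t²` it suffices that `S R⁻¹ S ≤ t² R`.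
Conjugating by `R^(-1/2)` turns this into `T² ≤ t²` for a self-adjoint `T` with `-t ≤ T ≤ t`,
which holds because `t² - T² = (t - T)(t + T)` is a product of commuting nonnegative elements.
-/

open Matrix
open scoped ComplexOrder

noncomputable section
namespace Paper

variable {n : ℕ}

/-- Real part `(A + Aᴴ)/2`. -/
def re (A : Matrix (Fin n) (Fin n) ℂ) : Matrix (Fin n) (Fin n) ℂ := (2⁻¹ : ℂ) • (A + Aᴴ)

/-- Imaginary part `(A - Aᴴ)/(2i)`. -/
def im (A : Matrix (Fin n) (Fin n) ℂ) : Matrix (Fin n) (Fin n) ℂ :=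
  (2 * Complex.I)⁻¹ • (A - Aᴴ)

/-- The sector `S_α`. -/
def sector (α : ℝ) : Set ℂ := {z | 0 < z.re ∧ |z.im| ≤ z.re * Real.tan α}

/-- Numerical range of a matrix. -/
def numericalRange (A : Matrix (Fin n) (Fin n) ℂ) : Set ℂ :=
  {z | ∃ x : Fin n → ℂ, star x ⬝ᵥ x = 1 ∧ z = star x ⬝ᵥ (A *ᵥ x)}

/-- Loewner order: `X ≤ Y` iff `Y - X` is positive semidefinite. -/
def loewnerLE (X Y : Matrix (Fin n) (Fin n) ℂ) : Prop := (Y - X).PosSemidef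

lemma re_isHermitian (A : Matrix (Fin n) (Fin n) ℂ) : (re A).IsHermitian := by
  show ((2⁻¹ : ℂ) • (A + Aᴴ))ᴴ = (2⁻¹ : ℂ) • (A + Aᴴ)
  rw [Matrix.conjTranspose_smul, Matrix.conjTranspose_add,
    Matrix.conjTranspose_conjTranspose, add_comm Aᴴ A]
  simp

/-- The `j`-th largest element of `v` (descending sort). -/
def nthLargest (v : Fin n → ℝ) (j : Fin n) : ℝ :=
  ((List.ofFn v).mergeSort (fun a b => decide (b ≤ a))).get
    (Fin.cast (by simp) j)

/-- `j`-th largest eigenvalue of a Hermitian matrix. -/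
def eigDesc {A : Matrix (Fin n) (Fin n) ℂ} (hA : A.IsHermitian) (j : Fin n) : ℝ :=
  nthLargest hA.eigenvalues j

/-- `j`-th largest singular value. -/
def singular (A : Matrix (Fin n) (Fin n) ℂ) (j : Fin n) : ℝ :=
  nthLargest (fun i => Real.sqrt ((Matrix.isHermitian_conjTranspose_mul_self A).eigenvalues i)) j

/-- The old Mathlib `Matrix.PosSemidef.sqrt` (removed since), spelled out with its old value. -/
def posSemidefSqrt {A : Matrix (Fin n) (Fin n) ℂ} (hA : A.PosSemidef) : Matrix (Fin n) (Fin n) ℂ :=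
  hA.1.eigenvectorUnitary.1 * diagonal ((↑) ∘ (√·) ∘ hA.1.eigenvalues) *
  (star hA.1.eigenvectorUnitary : Matrix (Fin n) (Fin n) ℂ)

/-- Weighted geometric mean of positive definite matrices. -/
def sharp (v : ℝ) {A B : Matrix (Fin n) (Fin n) ℂ} (hA : A.PosDef) (hB : B.PosDef) :
    Matrix (Fin n) (Fin n) ℂ :=
  posSemidefSqrt hA.posSemidef *
    (Matrix.isHermitian_mul_mul_conjTranspose (posSemidefSqrt hA.posSemidef)⁻¹ hB.1).cfc
      (fun x => Real.rpow x v) * posSemidefSqrt hA.posSemidef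

/-- Weighted arithmetic mean. -/
def arith (v : ℝ) (A B : Matrix (Fin n) (Fin n) ℂ) : Matrix (Fin n) (Fin n) ℂ :=
  (1 - v) • A + v • B

/-- Weighted harmonic mean. -/
def harm (v : ℝ) (A B : Matrix (Fin n) (Fin n) ℂ) : Matrix (Fin n) (Fin n) ℂ :=
  ((1 - v) • A⁻¹ + v • B⁻¹)⁻¹

/-- Kantorovich constant. -/
def K (h : ℝ) : ℝ := (h + 1) ^ 2 / (4 * h)

section

variable {A : Type*} [Ring A] [PartialOrder A] [StarRing A] [StarOrderedRing A] [TopologicalSpace A]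
  [Algebra ℝ A] [ContinuousFunctionalCalculus ℝ A IsSelfAdjoint] [NonnegSpectrumClass ℝ A]

lemma mul_self_le_sq_smul_one {s : A} {t : ℝ} (h₁ : -(t • 1) ≤ s) (h₂ : s ≤ t • 1) :
    s * s ≤ t ^ 2 • (1 : A) := by
  have hs : Commute (t • (1 : A)) s := (Commute.one_left s).smul_left t
  have hcomm : Commute (t • 1 - s) (t • 1 + s) :=
    ((Commute.refl _).add_right hs).sub_left (hs.symm.add_right (Commute.refl s))
  have hprod : (t • 1 - s) * (t • 1 + s) = t ^ 2 • (1 : A) - s * s := by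
    simp only [sub_mul, mul_add, smul_mul_smul, mul_one, hs.eq, sq]
    abel
  rw [← sub_nonneg, ← hprod]
  exact hcomm.mul_nonneg (sub_nonneg.mpr h₂) (neg_le_iff_add_nonneg'.mp h₁)

open CFC in
lemma mul_inverse_mul_le_sq_smul {r s : A} {t : ℝ} (hr : IsStrictlyPositive r)
    (h₁ : -(t • r) ≤ s) (h₂ : s ≤ t • r) :
    s * Ring.inverse r * s ≤ t ^ 2 • r := by
  set c := r ^ (1 / 2 : ℝ)
  set d := r ^ (-(1 / 2) : ℝ)
  have hc : IsSelfAdjoint c := rpow_nonneg.isSelfAdjoint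
  have hd : IsSelfAdjoint d := rpow_nonneg.isSelfAdjoint
  have hcd : c * d = 1 := rpow_mul_rpow_neg _ hr
  have hdc : d * c = 1 := rpow_neg_mul_rpow _ hr
  have hcc : c * c = r := by rw [← rpow_add hr.isUnit]; norm_num; exact rpow_one r hr.nonneg
  have hdd : d * d = Ring.inverse r := by
    rw [← rpow_add hr.isUnit, inverse_eq_rpow_neg_one hr]; norm_num
  have hdrd : ∀ u : ℝ, d * (u • r) * d = u • 1 := fun u => by
    rw [mul_smul_comm, smul_mul_assoc, ← hcc, ← mul_assoc, hdc, one_mul, hcd]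
  have hT₁ := hd.conjugate_le_conjugate h₁
  have hT₂ := hd.conjugate_le_conjugate h₂
  rw [← neg_smul, hdrd, neg_smul] at hT₁
  rw [hdrd] at hT₂
  have hT := mul_self_le_sq_smul_one hT₁ hT₂
  calc s * Ring.inverse r * s = c * d * s * (d * d) * s * (d * c) := by
        rw [hcd, hdc, hdd, one_mul, mul_one]
    _ = c * (d * s * d * (d * s * d)) * c := by simp only [mul_assoc]
    _ ≤ c * (t ^ 2 • 1) * c := hc.conjugate_le_conjugate hT
    _ = t ^ 2 • r := by rw [mul_smul_comm, smul_mul_assoc, mul_one, hcc]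

end

open scoped MatrixOrder

lemma loewnerLE_iff_le {X Y : Matrix (Fin n) (Fin n) ℂ} : loewnerLE X Y ↔ X ≤ Y := Iff.rfl

lemma dotProduct_conjTranspose_mulVec {m R : Type*} [Fintype m] [CommSemiring R] [StarRing R]
    (A : Matrix m m R) (x : m → R) :
    star x ⬝ᵥ (Aᴴ *ᵥ x) = star (star x ⬝ᵥ (A *ᵥ x)) := by
  rw [star_dotProduct x (A *ᵥ x), star_star, star_mulVec, ← dotProduct_mulVec]

lemma dotProduct_re_mulVec (A : Matrix (Fin n) (Fin n) ℂ) (x : Fin n → ℂ) :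
    star x ⬝ᵥ (re A *ᵥ x) = ((star x ⬝ᵥ (A *ᵥ x)).re : ℂ) := by
  rw [re, smul_mulVec, add_mulVec, dotProduct_smul, dotProduct_add,
    dotProduct_conjTranspose_mulVec, Complex.star_def, Complex.add_conj, smul_eq_mul]
  push_cast
  ring

lemma dotProduct_im_mulVec (A : Matrix (Fin n) (Fin n) ℂ) (x : Fin n → ℂ) :
    star x ⬝ᵥ (im A *ᵥ x) = ((star x ⬝ᵥ (A *ᵥ x)).im : ℂ) := by
  rw [im, smul_mulVec, sub_mulVec, dotProduct_smul, dotProduct_sub,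
    dotProduct_conjTranspose_mulVec, Complex.star_def, Complex.sub_conj, smul_eq_mul]
  push_cast
  field_simp

lemma im_isHermitian (A : Matrix (Fin n) (Fin n) ℂ) : (im A).IsHermitian := by
  rw [IsHermitian, im, conjTranspose_smul, conjTranspose_sub, conjTranspose_conjTranspose,
    ← neg_sub, smul_neg, ← neg_smul]
  congr 1
  simp

lemma ofReal_mul_mem_sector {α r : ℝ} (hr : 0 < r) {z : ℂ} (hz : z ∈ sector α) :
    (r : ℂ) * z ∈ sector α := by
  obtain ⟨hre, him⟩ := hz
  refine ⟨?_, ?_⟩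
  · simpa using mul_pos hr hre
  · simpa [abs_mul, abs_of_pos hr, mul_assoc] using mul_le_mul_of_nonneg_left him hr.le

lemma dotProduct_mulVec_mem_sector {α : ℝ} {A : Matrix (Fin n) (Fin n) ℂ}
    (hA : numericalRange A ⊆ sector α) {x : Fin n → ℂ} (hx : x ≠ 0) :
    star x ⬝ᵥ (A *ᵥ x) ∈ sector α := by
  obtain ⟨hr, hr_im⟩ := Complex.pos_iff.mp (dotProduct_star_self_pos_iff.mpr hx)
  set r := (star x ⬝ᵥ x).re
  have hxr : star x ⬝ᵥ x = (r : ℂ) := Complex.ext rfl (by simp [← hr_im])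
  have hquad (M : Matrix (Fin n) (Fin n) ℂ) (c : ℝ) :
      star ((c : ℂ) • x) ⬝ᵥ (M *ᵥ ((c : ℂ) • x)) = ((c ^ 2 : ℝ) : ℂ) * (star x ⬝ᵥ (M *ᵥ x)) := by
    simp only [star_smul, mulVec_smul, smul_dotProduct, dotProduct_smul, smul_eq_mul,
      Complex.star_def, Complex.conj_ofReal]
    push_cast
    ring
  set u := (((√r)⁻¹ : ℝ) : ℂ) • x
  have hu : star u ⬝ᵥ u = 1 := by
    have := hquad 1 (√r)⁻¹
    rw [one_mulVec, one_mulVec, hxr, inv_pow, Real.sq_sqrt hr.le] at this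
    rw [this]
    push_cast
    field_simp
  have : star x ⬝ᵥ (A *ᵥ x) = (r : ℂ) * (star u ⬝ᵥ (A *ᵥ u)) := by
    rw [hquad, inv_pow, Real.sq_sqrt hr.le]
    push_cast
    field_simp
  rw [this]
  exact ofReal_mul_mem_sector hr (hA ⟨u, hu, rfl⟩)

lemma re_posDef {α : ℝ} {A : Matrix (Fin n) (Fin n) ℂ} (hA : numericalRange A ⊆ sector α) :
    (re A).PosDef :=
  .of_dotProduct_mulVec_pos (re_isHermitian A) fun x hx => by
    rw [dotProduct_re_mulVec]
    exact_mod_cast (dotProduct_mulVec_mem_sector hA hx).1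

lemma abs_im_dotProduct_mulVec_le {α : ℝ} {A : Matrix (Fin n) (Fin n) ℂ}
    (hA : numericalRange A ⊆ sector α) (x : Fin n → ℂ) :
    |(star x ⬝ᵥ (A *ᵥ x)).im| ≤ Real.tan α * (star x ⬝ᵥ (A *ᵥ x)).re := by
  rcases eq_or_ne x 0 with rfl | hx
  · simp
  · rw [mul_comm]
    exact (dotProduct_mulVec_mem_sector hA hx).2

lemma dotProduct_smul_re_add_smul_im_mulVec (A : Matrix (Fin n) (Fin n) ℂ) (t ε : ℝ)
    (x : Fin n → ℂ) :
    star x ⬝ᵥ ((t • re A + ε • im A) *ᵥ x) =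
      ((t * (star x ⬝ᵥ (A *ᵥ x)).re + ε * (star x ⬝ᵥ (A *ᵥ x)).im : ℝ) : ℂ) := by
  simp only [add_mulVec, smul_mulVec, dotProduct_add, dotProduct_smul, dotProduct_re_mulVec,
    dotProduct_im_mulVec, Complex.real_smul]
  push_cast
  ring

lemma tan_smul_re_add_smul_im_posSemidef {α ε : ℝ} {A : Matrix (Fin n) (Fin n) ℂ}
    (hA : numericalRange A ⊆ sector α) (hε : |ε| ≤ 1) :
    (Real.tan α • re A + ε • im A).PosSemidef := by
  refine .of_dotProduct_mulVec_nonneg (((re_isHermitian A).smul (.all _)).add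
    ((im_isHermitian A).smul (.all _))) fun x => ?_
  rw [dotProduct_smul_re_add_smul_im_mulVec, Complex.zero_le_real]
  have him := abs_im_dotProduct_mulVec_le hA x
  have hεim : |ε * (star x ⬝ᵥ (A *ᵥ x)).im| ≤ |(star x ⬝ᵥ (A *ᵥ x)).im| := by
    rw [abs_mul]
    exact mul_le_of_le_one_left (abs_nonneg _) hε
  linarith [neg_abs_le (ε * (star x ⬝ᵥ (A *ᵥ x)).im)]

lemma im_le_tan_smul_re {α : ℝ} {A : Matrix (Fin n) (Fin n) ℂ}
    (hA : numericalRange A ⊆ sector α) : im A ≤ Real.tan α • re A := by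
  simpa [le_iff, sub_eq_add_neg] using tan_smul_re_add_smul_im_posSemidef hA (ε := -1) (by simp)

lemma neg_tan_smul_re_le_im {α : ℝ} {A : Matrix (Fin n) (Fin n) ℂ}
    (hA : numericalRange A ⊆ sector α) : -(Real.tan α • re A) ≤ im A := by
  rw [le_iff, sub_neg_eq_add, add_comm]
  simpa using tan_smul_re_add_smul_im_posSemidef hA (ε := 1) (by simp)

lemma isUnit_of_posDef_re {A : Matrix (Fin n) (Fin n) ℂ} (hR : (re A).PosDef) : IsUnit A := by
  rw [isUnit_iff_isUnit_det, isUnit_iff_ne_zero]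
  intro h
  obtain ⟨v, hv, hAv⟩ := exists_mulVec_eq_zero_iff.mpr h
  have := hR.dotProduct_mulVec_pos hv
  simp [dotProduct_re_mulVec, hAv] at this

lemma re_add_I_smul_im (A : Matrix (Fin n) (Fin n) ℂ) : re A + Complex.I • im A = A := by
  have h : Complex.I * (2 * Complex.I)⁻¹ = 2⁻¹ := by field_simp
  rw [re, im, smul_smul, h]
  module

lemma re_sub_I_smul_im (A : Matrix (Fin n) (Fin n) ℂ) : re A - Complex.I • im A = Aᴴ := by
  have h : Complex.I * (2 * Complex.I)⁻¹ = 2⁻¹ := by field_simp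
  rw [re, im, smul_smul, h]
  module

lemma add_I_smul_mul_inv_mul_sub_I_smul {m : Type*} [Fintype m] [DecidableEq m]
    {R : Matrix m m ℂ} (hR : IsUnit R.det) (S : Matrix m m ℂ) :
    (R + Complex.I • S) * R⁻¹ * (R - Complex.I • S) = R + S * R⁻¹ * S := by
  simp only [add_mul, mul_sub, Matrix.smul_mul, Matrix.mul_smul, mul_nonsing_inv R hR, one_mul,
    mul_assoc, nonsing_inv_mul R hR, mul_one, smul_smul, Complex.I_mul_I]
  module

lemma re_inv {A : Matrix (Fin n) (Fin n) ℂ} (hA : IsUnit A.det) :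
    re A⁻¹ = A⁻¹ * re A * (A⁻¹)ᴴ := by
  rw [re, re, conjTranspose_nonsing_inv, Matrix.mul_smul, Matrix.smul_mul, mul_add, add_mul,
    nonsing_inv_mul _ hA, one_mul, mul_assoc,
    mul_nonsing_inv _ (by rwa [det_conjTranspose, isUnit_star]), mul_one, add_comm]

lemma inv_mul_mul_conjTranspose_inv {m R : Type*} [Fintype m] [DecidableEq m] [CommRing R]
    [StarRing R] {A : Matrix m m R} (hA : IsUnit A.det) (X : Matrix m m R) :
    A⁻¹ * (A * X * Aᴴ) * (A⁻¹)ᴴ = X := by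
  rw [conjTranspose_nonsing_inv, ← mul_assoc A⁻¹, ← mul_assoc A⁻¹ A, nonsing_inv_mul _ hA,
    one_mul, mul_nonsing_inv_cancel_right _ _ (by rwa [det_conjTranspose, isUnit_star])]

/-- `(Re A)⁻¹ ≤ sec² α • Re (A⁻¹)` for a sector matrix. -/
theorem inv_re_le_sec_sq_re_inv (α : ℝ) (hα : α ∈ Set.Ico 0 (Real.pi / 2))
    (A : Matrix (Fin n) (Fin n) ℂ) (hA : numericalRange A ⊆ sector α) :
    loewnerLE (re A)⁻¹ (((Real.cos α)⁻¹ ^ 2) • re A⁻¹) := by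
  have hcos : Real.cos α ≠ 0 :=
    (Real.cos_pos_of_mem_Ioo ⟨by linarith [hα.1, Real.pi_pos], hα.2⟩).ne'
  have hsec : (Real.cos α)⁻¹ ^ 2 = 1 + Real.tan α ^ 2 := by
    rw [inv_pow, ← Real.inv_one_add_tan_sq hcos, inv_inv]
  have hR := re_posDef hA
  have hA₀ := (isUnit_iff_isUnit_det A).mp (isUnit_of_posDef_re hR)
  have hR₀ := (isUnit_iff_isUnit_det _).mp hR.isUnit
  have key : im A * (re A)⁻¹ * im A ≤ Real.tan α ^ 2 • re A := by
    rw [nonsing_inv_eq_ringInverse]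
    exact mul_inverse_mul_le_sq_smul hR.isStrictlyPositive (neg_tan_smul_re_le_im hA)
      (im_le_tan_smul_re hA)
  rw [loewnerLE_iff_le]
  calc (re A)⁻¹ = A⁻¹ * (A * (re A)⁻¹ * Aᴴ) * (A⁻¹)ᴴ :=
        (inv_mul_mul_conjTranspose_inv hA₀ _).symm
    _ = A⁻¹ * (re A + im A * (re A)⁻¹ * im A) * (A⁻¹)ᴴ := by
        rw [← add_I_smul_mul_inv_mul_sub_I_smul hR₀, re_add_I_smul_im, re_sub_I_smul_im]
    _ ≤ A⁻¹ * (re A + Real.tan α ^ 2 • re A) * (A⁻¹)ᴴ :=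
        star_right_conjugate_le_conjugate (add_le_add_right key _) _
    _ = (Real.cos α)⁻¹ ^ 2 • re A⁻¹ := by
        rw [re_inv hA₀, hsec, add_smul, one_smul, mul_add, add_mul,
          Matrix.mul_smul, Matrix.smul_mul]

end Paper
end
end

section
/- Let A, B be n×n positive definite complex matrices with 0 < m·I ≤ A, B ≤ M·I (0 < m ≤ M), v ∈ [0,1], h = M/m, K(h) = (h+1)²/(4h). Then det(A ∇_v B) ≤ K(h)ⁿ · det(A ♯_v B). (α = 0 case of Corollary 2.4(ii).) -/
open Matrix
open scoped ComplexOrder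

noncomputable section
open scoped MatrixOrder

section

variable {R : Type*} [Ring R] [PartialOrder R] [StarRing R] [StarOrderedRing R] [Algebra ℝ R]
  [PosSMulMono ℝ R]

lemma div_smul_one_le_conjugate_le_div_smul_one {m M : ℝ} (hm : 0 < m) (hmM : m ≤ M) {A B T : R}
    (hTAT : T * A * star T = 1) (hA₁ : m • 1 ≤ A) (hA₂ : A ≤ M • 1) (hB₁ : m • 1 ≤ B)
    (hB₂ : B ≤ M • 1) : (m / M) • 1 ≤ T * B * star T ∧ T * B * star T ≤ (M / m) • 1 := by
  have hM : 0 < M := hm.trans_le hmM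
  have conj {X Y : R} (h : X ≤ Y) : T * X * star T ≤ T * Y * star T :=
    star_right_conjugate_le_conjugate h T
  have conj_smul_one (c : ℝ) : T * (c • 1) * star T = c • (T * star T) := by
    rw [mul_smul_comm, mul_one, smul_mul_assoc]
  have hP₁ : m • (T * star T) ≤ 1 := by simpa only [conj_smul_one, hTAT] using conj hA₁
  have hP₂ : 1 ≤ M • (T * star T) := by simpa only [conj_smul_one, hTAT] using conj hA₂
  have hC₁ : m • (T * star T) ≤ T * B * star T := by simpa only [conj_smul_one] using conj hB₁
  have hC₂ : T * B * star T ≤ M • (T * star T) := by simpa only [conj_smul_one] using conj hB₂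
  constructor
  · calc (m / M) • (1 : R) ≤ (m / M) • (M • (T * star T)) :=
          smul_le_smul_of_nonneg_left hP₂ (by positivity)
      _ = m • (T * star T) := by rw [smul_smul, div_mul_cancel₀ _ hM.ne']
      _ ≤ T * B * star T := hC₁
  · calc T * B * star T ≤ M • (T * star T) := hC₂
      _ = (M / m) • (m • (T * star T)) := by rw [smul_smul, div_mul_cancel₀ _ hm.ne']
      _ ≤ (M / m) • 1 := smul_le_smul_of_nonneg_left hP₁ (by positivity)

end

namespace Matrix

variable {ι 𝕜 : Type*} [Fintype ι] [DecidableEq ι] [RCLike 𝕜]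

lemma IsHermitian.det_cfc {A : Matrix ι ι 𝕜} (hA : A.IsHermitian) (f : ℝ → ℝ) :
    (hA.cfc f).det = ∏ i, (f (hA.eigenvalues i) : 𝕜) := by
  simp [IsHermitian.cfc, -Unitary.conjStarAlgAut_apply]

lemma IsHermitian.cfc_const_add_const_mul {A : Matrix ι ι 𝕜} (hA : A.IsHermitian) (a b : ℝ) :
    hA.cfc (fun t => a + b * t) = a • 1 + b • A := by
  rw [← hA.cfc_eq, cfc_add .., cfc_const_mul .., cfc_const .., cfc_id' ..,
    Algebra.algebraMap_eq_smul_one]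

lemma IsHermitian.eigenvalues_mem_Icc_of_le {A : Matrix ι ι 𝕜} (hA : A.IsHermitian) {a b : ℝ}
    (ha : a • 1 ≤ A) (hb : A ≤ b • 1) (i : ι) : hA.eigenvalues i ∈ Set.Icc a b := by
  rw [← Algebra.algebraMap_eq_smul_one] at ha hb
  have hspec := hA.eigenvalues_mem_spectrum_real i
  exact ⟨(algebraMap_le_iff_le_spectrum hA.isSelfAdjoint).1 ha _ hspec,
    (le_algebraMap_iff_spectrum_le hA.isSelfAdjoint).1 hb _ hspec⟩

lemma mul_inv_mul_conjTranspose_inv_mul {S : Matrix ι ι 𝕜} (hS : S.IsHermitian)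
    (hdet : IsUnit S.det) (B : Matrix ι ι 𝕜) : S * (S⁻¹ * B * S⁻¹ᴴ) * S = B := by
  rw [conjTranspose_nonsing_inv, hS.eq, ← Matrix.mul_assoc, ← Matrix.mul_assoc,
    mul_nonsing_inv S hdet, Matrix.one_mul, Matrix.mul_assoc, nonsing_inv_mul S hdet,
    Matrix.mul_one]

lemma eigenvalues_inv_mul_mul_conjTranspose_inv_mem_Icc {A B S : Matrix ι ι 𝕜}
    (hS : S.IsHermitian) (hSA : S * S = A) (hdet : IsUnit S.det)
    (hC : (S⁻¹ * B * S⁻¹ᴴ).IsHermitian) {m M : ℝ} (hm : 0 < m) (hmM : m ≤ M)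
    (hA₁ : m • 1 ≤ A) (hA₂ : A ≤ M • 1) (hB₁ : m • 1 ≤ B) (hB₂ : B ≤ M • 1) (i : ι) :
    hC.eigenvalues i ∈ Set.Icc (m / M) (M / m) := by
  have hTAT : S⁻¹ * A * star S⁻¹ = 1 := by
    rw [star_eq_conjTranspose, conjTranspose_nonsing_inv, hS.eq, ← hSA, Matrix.mul_assoc,
      Matrix.mul_assoc, mul_nonsing_inv S hdet, Matrix.mul_one, nonsing_inv_mul S hdet]
  obtain ⟨h₁, h₂⟩ := div_smul_one_le_conjugate_le_div_smul_one hm hmM hTAT hA₁ hA₂ hB₁ hB₂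
  exact hC.eigenvalues_mem_Icc_of_le h₁ h₂ i

lemma det_mul_cfc_mul {A S C : Matrix ι ι 𝕜} (hSA : S * S = A) (hC : C.IsHermitian)
    (f : ℝ → ℝ) : (S * hC.cfc f * S).det = A.det * ∏ i, (f (hC.eigenvalues i) : 𝕜) := by
  rw [det_mul, det_mul, hC.det_cfc, ← hSA, det_mul]
  ring

end Matrix

namespace Paper

lemma four_mul_mul_le_sq_mul {h v t : ℝ} (hh : 0 < h) (hv₀ : 0 ≤ v) (hv₁ : v ≤ 1)
    (ht₁ : h⁻¹ ≤ t) (ht₂ : t ≤ h) :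
    4 * h * ((1 - v) + v * t) * ((1 - v) * t + v) ≤ (h + 1) ^ 2 * t := by
  have ht : 0 < t := (inv_pos.2 hh).trans_le ht₁
  have hht : 1 ≤ h * t := by simpa [hh.ne'] using mul_le_mul_of_nonneg_left ht₁ hh.le
  -- the gap is `(1 - 2v)²(h - 1)²t + 4v(1 - v)(h - t)(ht - 1)`
  nlinarith [mul_nonneg (mul_nonneg (sq_nonneg (1 - 2 * v)) (sq_nonneg (h - 1))) ht.le,
    mul_nonneg (mul_nonneg hv₀ (sub_nonneg.2 hv₁))
      (mul_nonneg (sub_nonneg.2 ht₂) (sub_nonneg.2 hht))]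

lemma one_sub_add_mul_le_K_mul_rpow {h v t : ℝ} (hh : 0 < h) (hv₀ : 0 ≤ v) (hv₁ : v ≤ 1)
    (ht₁ : h⁻¹ ≤ t) (ht₂ : t ≤ h) : (1 - v) + v * t ≤ K h * t ^ v := by
  have ht : 0 < t := (inv_pos.2 hh).trans_le ht₁
  set q := (1 - v) * t + v
  have hq : 0 < q := by rcases le_total t 1 with h | h <;> nlinarith
  have amgm : t ^ (1 - v) ≤ q := by
    simpa using Real.geom_mean_le_arith_mean2_weighted (sub_nonneg.2 hv₁) hv₀ ht.le zero_le_one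
      (by ring)
  have ht_le : t ≤ q * t ^ v := by
    calc t = t ^ (1 - v) * t ^ v := by rw [← Real.rpow_add ht]; simp
      _ ≤ q * t ^ v := by gcongr
  refine le_of_mul_le_mul_right ?_ (by positivity : 0 < 4 * h * q)
  calc ((1 - v) + v * t) * (4 * h * q) = 4 * h * ((1 - v) + v * t) * q := by ring
    _ ≤ (h + 1) ^ 2 * t := four_mul_mul_le_sq_mul hh hv₀ hv₁ ht₁ ht₂
    _ ≤ (h + 1) ^ 2 * (q * t ^ v) := by gcongr
    _ = K h * t ^ v * (4 * h * q) := by rw [K]; field_simp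

lemma prod_one_sub_add_mul_le_K_pow_mul_prod_rpow {ι : Type*} [Fintype ι] {h v : ℝ} (hh : 0 < h)
    (hv₀ : 0 ≤ v) (hv₁ : v ≤ 1) {μ : ι → ℝ} (hμ : ∀ i, μ i ∈ Set.Icc h⁻¹ h) :
    ∏ i, ((1 - v) + v * μ i) ≤ K h ^ Fintype.card ι * ∏ i, μ i ^ v := by
  rw [← Finset.card_univ, ← Finset.prod_const, ← Finset.prod_mul_distrib]
  refine Finset.prod_le_prod (fun i _ => ?_) fun i _ =>
    one_sub_add_mul_le_K_mul_rpow hh hv₀ hv₁ (hμ i).1 (hμ i).2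
  have : 0 ≤ μ i := (inv_pos.2 hh).le.trans (hμ i).1
  nlinarith

lemma posSemidefSqrt_eq_sqrt {A : Matrix (Fin n) (Fin n) ℂ} (hA : A.PosSemidef) :
    posSemidefSqrt hA = CFC.sqrt A := by
  rw [CFC.sqrt_eq_cfc, cfc_nnreal_eq_real _ A, hA.1.cfc_eq]
  simp only [posSemidefSqrt, IsHermitian.cfc, Unitary.conjStarAlgAut_apply]
  congr 3
  funext i
  simp [max_eq_left (hA.eigenvalues_nonneg i)]

lemma posSemidefSqrt_mul_self {A : Matrix (Fin n) (Fin n) ℂ} (hA : A.PosSemidef) :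
    posSemidefSqrt hA * posSemidefSqrt hA = A := by
  rw [posSemidefSqrt_eq_sqrt]
  exact CFC.sqrt_mul_sqrt_self A hA.nonneg

lemma isHermitian_posSemidefSqrt {A : Matrix (Fin n) (Fin n) ℂ} (hA : A.PosSemidef) :
    (posSemidefSqrt hA).IsHermitian := by
  rw [posSemidefSqrt_eq_sqrt]
  exact (CFC.sqrt_nonneg A).isSelfAdjoint

lemma arith_eq_mul_mul {A B S : Matrix (Fin n) (Fin n) ℂ} (hS : S.IsHermitian) (hSA : S * S = A)
    (hdet : IsUnit S.det) (v : ℝ) :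
    arith v A B = S * ((1 - v) • 1 + v • (S⁻¹ * B * S⁻¹ᴴ)) * S := by
  rw [Matrix.mul_add, Matrix.add_mul, Matrix.mul_smul, Matrix.smul_mul, Matrix.mul_one, hSA,
    Matrix.mul_smul, Matrix.smul_mul, mul_inv_mul_conjTranspose_inv_mul hS hdet, arith]

/-- determinant inequality between weighted arithmetic and geometric means. -/
theorem det_arith_le_kantorovich_pow_det_sharp (A B : Matrix (Fin n) (Fin n) ℂ) (hA : A.PosDef) (hB : B.PosDef)
    (v : ℝ) (hv : v ∈ Set.Icc 0 1) (m M : ℝ) (hm : 0 < m) (hmM : m ≤ M)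
    (hA1 : loewnerLE (m • (1 : Matrix (Fin n) (Fin n) ℂ)) A) (hA2 : loewnerLE A (M • 1))
    (hB1 : loewnerLE (m • (1 : Matrix (Fin n) (Fin n) ℂ)) B) (hB2 : loewnerLE B (M • 1)) :
    ((arith v A B).det).re ≤ K (M / m) ^ n * ((sharp v hA hB).det).re := by
  obtain ⟨hv₀, hv₁⟩ := hv
  set S := posSemidefSqrt hA.posSemidef
  have hSA : S * S = A := posSemidefSqrt_mul_self hA.posSemidef
  have hS : S.IsHermitian := isHermitian_posSemidefSqrt hA.posSemidef
  have hdet : IsUnit S.det :=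
    isUnit_of_mul_isUnit_left (by rw [← det_mul, hSA]; exact hA.det_pos.ne'.isUnit)
  have hC : (S⁻¹ * B * S⁻¹ᴴ).IsHermitian := isHermitian_mul_mul_conjTranspose _ hB.1
  have hμ (i : Fin n) : hC.eigenvalues i ∈ Set.Icc (M / m)⁻¹ (M / m) := inv_div M m ▸
    eigenvalues_inv_mul_mul_conjTranspose_inv_mem_Icc hS hSA hdet hC hm hmM hA1 hA2 hB1 hB2 i
  have harith : arith v A B = S * hC.cfc (fun t => (1 - v) + v * t) * S := by
    rw [hC.cfc_const_add_const_mul, arith_eq_mul_mul hS hSA hdet]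
  have hsharp : sharp v hA hB = S * hC.cfc (fun t => t ^ v) * S := rfl
  rw [harith, hsharp, det_mul_cfc_mul hSA, det_mul_cfc_mul hSA, ← RCLike.ofReal_prod,
    ← RCLike.ofReal_prod]
  simp only [RCLike.ofReal_eq_complex_ofReal, Complex.re_mul_ofReal]
  rw [mul_left_comm]
  have hdetA : 0 < A.det.re := (Complex.pos_iff.1 hA.det_pos).1
  gcongr
  simpa only [Fintype.card_fin] using
    prod_one_sub_add_mul_le_K_pow_mul_prod_rpow (div_pos (hm.trans_le hmM) hm) hv₀ hv₁ hμ

end Paper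
end
end

section
/- For n×n positive definite complex matrices A and B, det(A + B) ≤ det(I + A) · det(I + B). -/
/-!
Write `B = T⋆T`. The matrix determinant lemma gives
`det (1 + A + B) = det (1 + A) * det (1 + T (1 + A)⁻¹ T⋆)`, and since `(1 + A)⁻¹ ≤ 1` the second
factor is at most `det (1 + T T⋆) = det (1 + T⋆T) = det (1 + B)` (Weinstein–Aronszajn), by
monotonicity of `det` in the Loewner order. The same monotonicity gives
`det (A + B) ≤ det (1 + A + B)`. It holds because `det (X + C⋆C) = det X * det (1 + C X⁻¹ C⋆)`
and `det (1 + R) = ∏ (1 + λᵢ) ≥ 1` for `R ≥ 0`.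
-/

open Matrix
open scoped ComplexOrder

noncomputable section
namespace Paper

variable {n : ℕ}

section

open scoped MatrixOrder

variable {𝕜 m : Type*} [RCLike 𝕜] [Fintype m] [DecidableEq m]

lemma det_one_add_eq_prod_eigenvalues {R : Matrix m m 𝕜} (hR : R.IsHermitian) :
    det (1 + R) = ∏ i, (1 + hR.eigenvalues i : 𝕜) := by
  conv_lhs => rw [hR.spectral_theorem,
    ← map_one (Unitary.conjStarAlgAut 𝕜 _ hR.eigenvectorUnitary), ← map_add]
  rw [Unitary.conjStarAlgAut_apply, det_mul, det_mul, mul_right_comm, ← det_mul,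
    Unitary.mul_star_self_of_mem hR.eigenvectorUnitary.2, det_one, one_mul, ← diagonal_one,
    diagonal_add, det_diagonal]
  simp

lemma one_le_det_one_add {R : Matrix m m 𝕜} (hR : R.PosSemidef) : 1 ≤ det (1 + R) := by
  rw [det_one_add_eq_prod_eigenvalues hR.1]
  exact Finset.one_le_prod fun i _ =>
    le_add_of_nonneg_right (RCLike.ofReal_nonneg.mpr (hR.eigenvalues_nonneg i))

lemma det_le_det_of_le {X Y : Matrix m m 𝕜} (hX : X.PosDef) (hXY : X ≤ Y) :
    det X ≤ det Y := by
  obtain ⟨C, hC⟩ := CStarAlgebra.nonneg_iff_eq_star_mul_self.mp (sub_nonneg.mpr hXY)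
  rw [← add_sub_cancel X Y, hC, star_eq_conjTranspose, det_add_mul _ _ hX.det_pos.ne'.isUnit]
  exact le_mul_of_one_le_right hX.det_pos.le
    (one_le_det_one_add (hX.inv.posSemidef.mul_mul_conjTranspose_same C))

lemma det_le_det_one_add {X : Matrix m m 𝕜} (hX : X.PosDef) : det X ≤ det (1 + X) :=
  det_le_det_of_le hX (le_add_of_nonneg_left PosSemidef.one.nonneg)

lemma inv_one_add_le_one {A : Matrix m m 𝕜} (hA : A.PosSemidef) : (1 + A)⁻¹ ≤ 1 := by
  have h1A : (1 + A).PosDef := PosDef.one.add_posSemidef hA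
  set W := (1 + A)⁻¹
  have hWA : W * (1 + A) = 1 := nonsing_inv_mul _ h1A.det_pos.ne'.isUnit
  have hAW : (1 + A) * W = 1 := mul_nonsing_inv _ h1A.det_pos.ne'.isUnit
  have hWh : Wᴴ = W := h1A.inv.1
  -- `1 - W = W * A = W * (A + A * A) * W`, a congruence of a positive matrix
  have hcongr : 1 - W = Wᴴ * (A + Aᴴ * A) * W := by
    rw [hWh, hA.1.eq, ← mul_one_add, mul_assoc, mul_assoc, hAW, mul_one, ← hWA,
      mul_add, mul_one, add_sub_cancel_left]
  rw [← sub_nonneg, hcongr]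
  exact ((hA.add (posSemidef_conjTranspose_mul_self A)).conjTranspose_mul_mul_same W).nonneg

lemma det_one_add_add_le {A B : Matrix m m 𝕜} (hA : A.PosSemidef) (hB : B.PosSemidef) :
    det (1 + A + B) ≤ det (1 + A) * det (1 + B) := by
  obtain ⟨T, rfl⟩ := CStarAlgebra.nonneg_iff_eq_star_mul_self.mp hB.nonneg
  have h1A : (1 + A).PosDef := PosDef.one.add_posSemidef hA
  have hTWT : (1 + T * (1 + A)⁻¹ * star T).PosDef :=
    PosDef.one.add_posSemidef (h1A.inv.posSemidef.mul_mul_conjTranspose_same T)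
  calc det (1 + A + star T * T) = det (1 + A) * det (1 + T * (1 + A)⁻¹ * star T) :=
        det_add_mul _ _ h1A.det_pos.ne'.isUnit
    _ ≤ det (1 + A) * det (1 + T * 1 * star T) := by
        refine mul_le_mul_of_nonneg_left (det_le_det_of_le hTWT ?_) h1A.det_pos.le
        exact add_le_add_right (star_right_conjugate_le_conjugate (inv_one_add_le_one hA) T) 1
    _ = det (1 + A) * det (1 + star T * T) := by rw [mul_one, det_one_add_mul_comm]

end

/-- `det (A + B) ≤ det (I + A) det (I + B)`. -/
theorem det_add_le_det_one_add_mul_det_one_add (A B : Matrix (Fin n) (Fin n) ℂ)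
    (hA : A.PosDef) (hB : B.PosDef) :
    ((A + B).det).re ≤ ((1 + A).det).re * ((1 + B).det).re := by
  have hdet : (A + B).det ≤ (1 + A).det * (1 + B).det :=
    calc (A + B).det ≤ (1 + (A + B)).det := det_le_det_one_add (hA.add hB)
      _ = (1 + A + B).det := by rw [add_assoc]
      _ ≤ (1 + A).det * (1 + B).det := det_one_add_add_le hA.posSemidef hB.posSemidef
  have him : ((1 + A).det).im = 0 :=
    (Complex.pos_iff.mp (PosDef.one.add_posSemidef hA.posSemidef).det_pos).2.symm
  simpa [Complex.mul_re, him] using (Complex.le_def.mp hdet).1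

end Paper
end
end
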